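/- Let 0 < s < 1 and x ≥ y ≥ 0. Then ⟨x + y⟩^s ≤ (⟨x⟩/⟨x+y⟩)^(1-s) · (⟨x⟩^s + ⟨y⟩^s), where ⟨x⟩ = (1 + x²)^(1/2). -/
import Mathlib


/-- Japanese bracket. -/
noncomputable def jb (x : ℝ) : ℝ := Real.sqrt (1 + x ^ 2)

lemma jb_pos (x : ℝ) : 0 < jb x := by
  unfold jb; positivity

lemma jb_sq (x : ℝ) : jb x ^ 2 = 1 + x ^ 2 := by
  unfold jb
  rw [Real.sq_sqrt (by positivity)]

lemma jb_ge_self (x : ℝ) (hx : 0 ≤ x) : x ≤ jb x := by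
  unfold jb
  calc x = Real.sqrt (x ^ 2) := by rw [Real.sqrt_sq hx]
    _ ≤ Real.sqrt (1 + x ^ 2) := Real.sqrt_le_sqrt (by nlinarith)

lemma jb_mono {x y : ℝ} (hy : 0 ≤ y) (hxy : y ≤ x) : jb y ≤ jb x := by
  unfold jb
  exact Real.sqrt_le_sqrt (by nlinarith)

theorem stmt_7 (s x y : ℝ) (hs0 : 0 < s) (hs1 : s < 1) (hy : 0 ≤ y) (hxy : y ≤ x) :
    jb (x + y) ^ s ≤ (jb x / jb (x + y)) ^ (1 - s) * (jb x ^ s + jb y ^ s) := by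
  have hx : 0 ≤ x := hy.trans hxy
  set a := jb x with ha
  set b := jb y with hb
  set c := jb (x + y) with hc
  have hap : 0 < a := jb_pos x
  have hbp : 0 < b := jb_pos y
  have hcp : 0 < c := jb_pos (x + y)
  have hba : b ≤ a := jb_mono hy hxy
  -- c ≤ a + b
  have hxa : x ≤ a := jb_ge_self x hx
  have hyb : y ≤ b := jb_ge_self y hy
  have ha2 : a ^ 2 = 1 + x ^ 2 := jb_sq x
  have hb2 : b ^ 2 = 1 + y ^ 2 := jb_sq y
  have hcab : c ≤ a + b := by
    rw [hc]
    unfold jb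
    rw [show a + b = Real.sqrt ((a + b) ^ 2) by
      rw [Real.sqrt_sq (by positivity)]]
    apply Real.sqrt_le_sqrt
    nlinarith [mul_le_mul hxa hyb hy hap.le]
  -- key: b ≤ a^(1-s) * b^s
  have h1s : (0:ℝ) ≤ 1 - s := by linarith
  have hkey : b ≤ a ^ (1 - s) * b ^ s := by
    calc b = b ^ (1 - s) * b ^ s := by
            rw [← Real.rpow_add hbp, show (1 - s) + s = 1 by ring, Real.rpow_one]
      _ ≤ a ^ (1 - s) * b ^ s := by gcongr
  -- divide
  rw [Real.div_rpow hap.le hcp.le, div_mul_eq_mul_div, le_div_iff₀ (by positivity)]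
  have hc1 : c ^ s * c ^ (1 - s) = c := by
    rw [← Real.rpow_add hcp, show s + (1 - s) = 1 by ring, Real.rpow_one]
  have ha1 : a ^ (1 - s) * a ^ s = a := by
    rw [← Real.rpow_add hap, show (1 - s) + s = 1 by ring, Real.rpow_one]
  calc c ^ s * c ^ (1 - s) = c := hc1
    _ ≤ a + b := hcab
    _ ≤ a ^ (1 - s) * a ^ s + a ^ (1 - s) * b ^ s := by
        rw [ha1]; gcongr
    _ = a ^ (1 - s) * (a ^ s + b ^ s) := by ring
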